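/- Let (M, d) be a metric space, p ≥ 1, π ∈ Δ^{n-1} with positive entries, and let B be a π-stationary row-stochastic matrix. For any x ∈ M^n with not all components equal and any t ∈ ℕ, the nonlinear Rayleigh quotient satisfies R(x; B^t, d^p) ≤ t^p · R(x; B, d^p). -/
import Mathlib


open Finset

/-- Weighted Minkowski inequality over a fintype. -/
lemma weighted_Lp_add_le {ι : Type*} [Fintype ι] {p : ℝ} (hp : 1 ≤ p)
    (μ a b : ι → ℝ) (hμ : ∀ m, 0 ≤ μ m) (ha : ∀ m, 0 ≤ a m) (hb : ∀ m, 0 ≤ b m) :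
    (∑ m, μ m * (a m + b m) ^ p) ^ (1 / p) ≤
      (∑ m, μ m * a m ^ p) ^ (1 / p) + (∑ m, μ m * b m ^ p) ^ (1 / p) := by
  have hp0 : p ≠ 0 := by positivity
  have key : ∀ c : ι → ℝ, (∀ m, 0 ≤ c m) →
      ∀ m, (μ m ^ (1 / p) * c m) ^ p = μ m * c m ^ p := by
    intro c hc m
    rw [Real.mul_rpow (Real.rpow_nonneg (hμ m) _) (hc m), ← Real.rpow_mul (hμ m),
      one_div, inv_mul_cancel₀ hp0, Real.rpow_one]
  have := Real.Lp_add_le_of_nonneg (univ : Finset ι)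
    (f := fun m => μ m ^ (1 / p) * a m) (g := fun m => μ m ^ (1 / p) * b m) hp
    (fun m _ => mul_nonneg (Real.rpow_nonneg (hμ m) _) (ha m))
    (fun m _ => mul_nonneg (Real.rpow_nonneg (hμ m) _) (hb m))
  calc (∑ m, μ m * (a m + b m) ^ p) ^ (1 / p)
      = (∑ m, (μ m ^ (1 / p) * a m + μ m ^ (1 / p) * b m) ^ p) ^ (1 / p) := by
        congr 1; refine Finset.sum_congr rfl fun m _ => ?_
        rw [← mul_add]
        exact (key (fun m => a m + b m) (fun m => add_nonneg (ha m) (hb m)) m).symm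
    _ ≤ (∑ m, (μ m ^ (1 / p) * a m) ^ p) ^ (1 / p)
          + (∑ m, (μ m ^ (1 / p) * b m) ^ p) ^ (1 / p) := this
    _ = (∑ m, μ m * a m ^ p) ^ (1 / p) + (∑ m, μ m * b m ^ p) ^ (1 / p) := by
        rw [Finset.sum_congr rfl fun m _ => key a ha m,
          Finset.sum_congr rfl fun m _ => key b hb m]

/-- The nonlinear Rayleigh quotient of a point configuration `x` in a metric
space `M` with respect to a stochastic matrix `B`, weights `w` and power `p`. -/
noncomputable def rayleigh {M : Type*} [MetricSpace M] {n : ℕ} (w : Fin n → ℝ)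
    (B : Matrix (Fin n) (Fin n) ℝ) (x : Fin n → M) (p : ℝ) : ℝ :=
  (∑ i, ∑ j, w i * B i j * dist (x i) (x j) ^ p) /
    (∑ i, ∑ j, w i * w j * dist (x i) (x j) ^ p)

/-- R(x; B^t, d^p) ≤ t^p · R(x; B, d^p). -/
theorem rayleigh_pow_le {M : Type*} [MetricSpace M] (n : ℕ) (p : ℝ) (hp : 1 ≤ p)
    (w : Fin n → ℝ) (hwpos : ∀ i, 0 < w i) (hwsum : ∑ i, w i = 1)
    (B : Matrix (Fin n) (Fin n) ℝ)
    (hB0 : ∀ i j, 0 ≤ B i j) (hBrow : ∀ i, ∑ j, B i j = 1)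
    (hBstat : ∀ j, ∑ i, w i * B i j = w j)
    (x : Fin n → M) (hx : ∃ i j, x i ≠ x j) (t : ℕ) :
    rayleigh w (B ^ t) x p ≤ (t : ℝ) ^ p * rayleigh w B x p := by
  have hp0 : p ≠ 0 := by positivity
  have hppos : (0:ℝ) < p := lt_of_lt_of_le one_pos hp
  -- entries of powers are nonnegative
  have hBt0 : ∀ s i j, 0 ≤ (B ^ s) i j := by
    intro s
    induction s with
    | zero =>
      intro i j
      by_cases h : i = j <;> simp [pow_zero, Matrix.one_apply, h]
    | succ s ih =>
      intro i j
      rw [pow_succ, Matrix.mul_apply]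
      exact Finset.sum_nonneg fun k _ => mul_nonneg (ih i k) (hB0 k j)
  -- rows of powers sum to 1
  have hBtrow : ∀ s i, ∑ j, (B ^ s) i j = 1 := by
    intro s
    induction s with
    | zero => intro i; simp [Matrix.one_apply]
    | succ s ih =>
      intro i
      simp only [pow_succ, Matrix.mul_apply]
      rw [Finset.sum_comm]
      simp_rw [← Finset.mul_sum, hBrow, mul_one]
      exact ih i
  set E : ℕ → ℝ := fun s => ∑ i, ∑ j, w i * (B ^ s) i j * dist (x i) (x j) ^ p with hE
  have hEnn : ∀ s, 0 ≤ E s := fun s =>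
    Finset.sum_nonneg fun i _ => Finset.sum_nonneg fun j _ =>
      mul_nonneg (mul_nonneg (hwpos i).le (hBt0 s i j)) (Real.rpow_nonneg dist_nonneg p)
  -- key subadditivity step
  have key : ∀ s : ℕ, E (s + 1) ^ (1 / p) ≤ E 1 ^ (1 / p) + E s ^ (1 / p) := by
    intro s
    have h1 : E (s + 1) = ∑ m : Fin n × Fin n × Fin n,
        w m.1 * B m.1 m.2.1 * (B ^ s) m.2.1 m.2.2 *
          (dist (x m.1) (x m.2.2) ^ p) := by
      simp only [hE, pow_succ', Matrix.mul_apply, Fintype.sum_prod_type]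
      refine Finset.sum_congr rfl fun i _ => ?_
      simp_rw [Finset.mul_sum, Finset.sum_mul]
      rw [Finset.sum_comm]
      exact Finset.sum_congr rfl fun j _ => Finset.sum_congr rfl fun k _ => by ring
    have h2 : ∑ m : Fin n × Fin n × Fin n,
        (w m.1 * B m.1 m.2.1 * (B ^ s) m.2.1 m.2.2) *
          (dist (x m.1) (x m.2.1) ^ p) = E 1 := by
      simp only [hE, pow_one, Fintype.sum_prod_type]
      refine Finset.sum_congr rfl fun i _ => Finset.sum_congr rfl fun j _ => ?_
      rw [← Finset.sum_mul, ← Finset.mul_sum, hBtrow s j, mul_one]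
    have h3 : ∑ m : Fin n × Fin n × Fin n,
        (w m.1 * B m.1 m.2.1 * (B ^ s) m.2.1 m.2.2) *
          (dist (x m.2.1) (x m.2.2) ^ p) = E s := by
      simp only [hE, Fintype.sum_prod_type]
      rw [Finset.sum_comm]
      refine Finset.sum_congr rfl fun j _ => ?_
      rw [Finset.sum_comm]
      refine Finset.sum_congr rfl fun k _ => ?_
      simp_rw [mul_assoc (w _ * B _ j)]
      rw [← Finset.sum_mul, hBstat j, mul_assoc]
    have hmono : E (s + 1) ≤ ∑ m : Fin n × Fin n × Fin n,
        (w m.1 * B m.1 m.2.1 * (B ^ s) m.2.1 m.2.2) *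
          ((dist (x m.1) (x m.2.1) + dist (x m.2.1) (x m.2.2)) ^ p) := by
      rw [h1]
      refine Finset.sum_le_sum fun m _ => ?_
      refine mul_le_mul_of_nonneg_left ?_
        (mul_nonneg (mul_nonneg (hwpos _).le (hB0 _ _)) (hBt0 s _ _))
      exact Real.rpow_le_rpow dist_nonneg (dist_triangle _ _ _) hppos.le
    calc E (s + 1) ^ (1 / p)
        ≤ (∑ m : Fin n × Fin n × Fin n,
            (w m.1 * B m.1 m.2.1 * (B ^ s) m.2.1 m.2.2) *
              ((dist (x m.1) (x m.2.1) + dist (x m.2.1) (x m.2.2)) ^ p)) ^ (1 / p) :=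
          Real.rpow_le_rpow (hEnn _) hmono (by positivity)
      _ ≤ _ := by
          have := weighted_Lp_add_le hp
            (fun m : Fin n × Fin n × Fin n => w m.1 * B m.1 m.2.1 * (B ^ s) m.2.1 m.2.2)
            (fun m => dist (x m.1) (x m.2.1)) (fun m => dist (x m.2.1) (x m.2.2))
            (fun m => mul_nonneg (mul_nonneg (hwpos _).le (hB0 _ _)) (hBt0 s _ _))
            (fun m => dist_nonneg) (fun m => dist_nonneg)
          rw [h2, h3] at this
          exact this
  -- E 0 = 0
  have hE0 : E 0 = 0 := by
    simp only [hE, pow_zero, Matrix.one_apply]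
    refine Finset.sum_eq_zero fun i _ => Finset.sum_eq_zero fun j _ => ?_
    by_cases h : i = j
    · subst h; simp [Real.zero_rpow hp0]
    · simp [h]
  -- induction: E s ^ (1/p) ≤ s * E 1 ^ (1/p)
  have hind : ∀ s : ℕ, E s ^ (1 / p) ≤ (s : ℝ) * E 1 ^ (1 / p) := by
    intro s
    induction s with
    | zero =>
      simp only [hE0, Nat.cast_zero, zero_mul]
      rw [Real.zero_rpow (one_div_ne_zero hp0)]
    | succ s ih =>
      calc E (s + 1) ^ (1 / p) ≤ E 1 ^ (1 / p) + E s ^ (1 / p) := key s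
        _ ≤ E 1 ^ (1 / p) + (s : ℝ) * E 1 ^ (1 / p) := by linarith
        _ = ((s + 1 : ℕ) : ℝ) * E 1 ^ (1 / p) := by push_cast; ring
  -- hence E t ≤ t^p * E 1
  have cancel : ∀ y : ℝ, 0 ≤ y → (y ^ (1 / p)) ^ p = y := fun y hy => by
    rw [← Real.rpow_mul hy, one_div, inv_mul_cancel₀ hp0, Real.rpow_one]
  have hEt : E t ≤ (t : ℝ) ^ p * E 1 := by
    have h := Real.rpow_le_rpow (Real.rpow_nonneg (hEnn t) _) (hind t) hppos.le
    rw [cancel _ (hEnn t),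
      Real.mul_rpow (Nat.cast_nonneg t) (Real.rpow_nonneg (hEnn 1) _),
      cancel _ (hEnn 1)] at h
    exact h
  -- positivity of the denominator
  have hD : 0 < ∑ i, ∑ j, w i * w j * dist (x i) (x j) ^ p := by
    obtain ⟨i0, j0, hij⟩ := hx
    refine Finset.sum_pos' (fun i _ => Finset.sum_nonneg fun j _ =>
      mul_nonneg (mul_nonneg (hwpos i).le (hwpos j).le) (Real.rpow_nonneg dist_nonneg p))
      ⟨i0, Finset.mem_univ i0, ?_⟩
    refine Finset.sum_pos' (fun j _ =>
      mul_nonneg (mul_nonneg (hwpos i0).le (hwpos j).le) (Real.rpow_nonneg dist_nonneg p))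
      ⟨j0, Finset.mem_univ j0, ?_⟩
    have : 0 < dist (x i0) (x j0) := dist_pos.mpr hij
    exact mul_pos (mul_pos (hwpos i0) (hwpos j0)) (Real.rpow_pos_of_pos this p)
  have hray1 : rayleigh w B x p = E 1 / (∑ i, ∑ j, w i * w j * dist (x i) (x j) ^ p) := by
    simp [rayleigh, hE, pow_one]
  have hrayt : rayleigh w (B ^ t) x p
      = E t / (∑ i, ∑ j, w i * w j * dist (x i) (x j) ^ p) := rfl
  rw [hray1, hrayt, ← mul_div_assoc]
  gcongr
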